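/- If simplicial complexes K and L have the same strong homotopy type (i.e., there are simplicial maps φ : K → L and ψ : L → K with φ∘ψ in the contiguity class of the identity of L and ψ∘φ in the contiguity class of the identity of K), then their categorical products K Π K and L Π L have the same strong homotopy type. -/

import Mathlib

attribute [local instance] Classical.decEq

/-- An abstract simplicial complex on vertex set `V`. -/
structure SC (V : Type) where
  faces : Set (Finset V)
  down_closed : ∀ {σ τ : Finset V}, σ ∈ faces → τ ⊆ σ → τ.Nonempty → τ ∈ faces

/-- A vertex map inducing a simplicial map `K → L`. -/
def IsSimplicialMap {V W : Type} (K : SC V) (L : SC W) (f : V → W) : Prop :=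
  ∀ σ ∈ K.faces, σ.image f ∈ L.faces

/-- Two maps are contiguous: for each simplex, the union of images is a simplex. -/
def Contiguous {V W : Type} (K : SC V) (L : SC W) (f g : V → W) : Prop :=
  ∀ σ ∈ K.faces, σ.image f ∪ σ.image g ∈ L.faces

/-- Being in the same contiguity class: connected by a finite chain of contiguous maps. -/
def ContigClass {V W : Type} (K : SC V) (L : SC W) : (V → W) → (V → W) → Prop :=
  Relation.ReflTransGen (Contiguous K L)

/-- The categorical product of two simplicial complexes. -/
def prodSC {V W : Type} (K : SC V) (L : SC W) : SC (V × W) where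
  faces := {σ | σ.image Prod.fst ∈ K.faces ∧ σ.image Prod.snd ∈ L.faces}
  down_closed := fun hσ hτσ hne =>
    ⟨K.down_closed hσ.1 (Finset.image_subset_image hτσ) (hne.image _),
     L.down_closed hσ.2 (Finset.image_subset_image hτσ) (hne.image _)⟩

/-- `Ω` is a Farber subcomplex of `K Π K`: a subcomplex admitting a simplicial map
`s : Ω → K` with `Δ ∘ s` in the contiguity class of the inclusion. -/
def IsFarber {V : Type} (K : SC V) (Ω : SC (V × V)) : Prop :=
  Ω.faces ⊆ (prodSC K K).faces ∧
  ∃ s : V × V → V, IsSimplicialMap Ω K s ∧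
    ContigClass Ω (prodSC K K) (fun p => (s p, s p)) id

/-- `K Π K` is covered by `n + 1` Farber subcomplexes. -/
def TCle {V : Type} (K : SC V) (n : ℕ) : Prop :=
  ∃ Ω : Fin (n + 1) → SC (V × V), (∀ i, IsFarber K (Ω i)) ∧
    ∀ σ ∈ (prodSC K K).faces, ∃ i, σ ∈ (Ω i).faces

/-- Discrete topological complexity. -/
noncomputable def TCdisc {V : Type} (K : SC V) : ℕ∞ :=
  sInf {n : ℕ∞ | ∃ m : ℕ, n = (m : ℕ∞) ∧ TCle K m}

/-- A categorical subcomplex: the inclusion is in the contiguity class of a constant map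
at a vertex of `K`. -/
def IsCategorical {V : Type} (K : SC V) (L : SC V) : Prop :=
  L.faces ⊆ K.faces ∧ ∃ v : V, {v} ∈ K.faces ∧ ContigClass L K id (fun _ => v)

/-- `K` is covered by `n + 1` categorical subcomplexes. -/
def scatLe {V : Type} (K : SC V) (n : ℕ) : Prop :=
  ∃ L : Fin (n + 1) → SC V, (∀ i, IsCategorical K (L i)) ∧
    ∀ σ ∈ K.faces, ∃ i, σ ∈ (L i).faces

/-- Normalized simplicial LS-category. -/
noncomputable def scat {V : Type} (K : SC V) : ℕ∞ :=
  sInf {n : ℕ∞ | ∃ m : ℕ, n = (m : ℕ∞) ∧ scatLe K m}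

/-- The preimage subcomplex of a subcomplex `Ω` under a vertex map `f`,
inside an ambient complex `M`. -/
def preimSC {V W : Type} (M : SC W) (Ω : SC V) (f : W → V) : SC W where
  faces := {τ | τ ∈ M.faces ∧ τ.image f ∈ Ω.faces}
  down_closed := fun hσ hτσ hne =>
    ⟨M.down_closed hσ.1 hτσ hne,
     Ω.down_closed hσ.2 (Finset.image_subset_image hτσ) (hne.image _)⟩

/-- `K` and `L` have the same strong homotopy type. -/
def StrongEquiv {V W : Type} (K : SC V) (L : SC W) : Prop :=
  ∃ (φ : V → W) (ψ : W → V), IsSimplicialMap K L φ ∧ IsSimplicialMap L K ψ ∧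
    ContigClass L L (φ ∘ ψ) id ∧ ContigClass K K (ψ ∘ φ) id

/-- `K` is edge-path connected. -/
def EdgeConn {V : Type} (K : SC V) : Prop :=
  ∀ v w : V, {v} ∈ K.faces → {w} ∈ K.faces →
    Relation.ReflTransGen (fun a b => ({a, b} : Finset V) ∈ K.faces) v w

/-- `K` is strongly collapsible: the identity is in the contiguity class of a constant map. -/
def StronglyCollapsible {V : Type} (K : SC V) : Prop :=
  ∃ v : V, {v} ∈ K.faces ∧ ContigClass K K id (fun _ => v)

section

variable {V₁ V₂ W₁ W₂ X : Type} {K₁ : SC V₁} {K₂ : SC V₂} {L₁ : SC W₁} {L₂ : SC W₂}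

/- The instance binder lets these rewrite under the classical `DecidableEq (W₁ × W₂)` that the
definitions above carry, which is not the one instance search would pick for a product type. -/
theorem image_fst_image_prodMap [DecidableEq (W₁ × W₂)] (σ : Finset (V₁ × V₂))
    (f : V₁ → W₁) (g : V₂ → W₂) :
    (σ.image (Prod.map f g)).image Prod.fst = (σ.image Prod.fst).image f := by
  simp only [Finset.image_image]
  rfl

theorem image_snd_image_prodMap [DecidableEq (W₁ × W₂)] (σ : Finset (V₁ × V₂))
    (f : V₁ → W₁) (g : V₂ → W₂) :
    (σ.image (Prod.map f g)).image Prod.snd = (σ.image Prod.snd).image g := by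
  simp only [Finset.image_image]
  rfl

theorem isSimplicialMap_id (K : SC X) : IsSimplicialMap K K id := by
  intro σ hσ
  rwa [Finset.image_id]

theorem IsSimplicialMap.comp {M : SC X} {f : V₁ → W₁} {g : W₁ → X}
    (hg : IsSimplicialMap L₁ M g) (hf : IsSimplicialMap K₁ L₁ f) :
    IsSimplicialMap K₁ M (g ∘ f) := by
  intro σ hσ
  rw [← Finset.image_image]
  exact hg _ (hf σ hσ)

theorem IsSimplicialMap.contiguous_self {f : V₁ → W₁} (hf : IsSimplicialMap K₁ L₁ f) :
    Contiguous K₁ L₁ f f := by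
  intro σ hσ
  rw [Finset.union_self]
  exact hf σ hσ

theorem IsSimplicialMap.prodMap {f : V₁ → W₁} {g : V₂ → W₂}
    (hf : IsSimplicialMap K₁ L₁ f) (hg : IsSimplicialMap K₂ L₂ g) :
    IsSimplicialMap (prodSC K₁ K₂) (prodSC L₁ L₂) (Prod.map f g) := by
  intro σ hσ
  refine ⟨?_, ?_⟩
  · simp only [image_fst_image_prodMap]
    exact hf _ hσ.1
  · simp only [image_snd_image_prodMap]
    exact hg _ hσ.2

theorem Contiguous.prodMap {f f' : V₁ → W₁} {g g' : V₂ → W₂}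
    (hf : Contiguous K₁ L₁ f f') (hg : Contiguous K₂ L₂ g g') :
    Contiguous (prodSC K₁ K₂) (prodSC L₁ L₂) (Prod.map f g) (Prod.map f' g') := by
  intro σ hσ
  refine ⟨?_, ?_⟩
  · simp only [Finset.image_union, image_fst_image_prodMap]
    exact hf _ hσ.1
  · simp only [Finset.image_union, image_snd_image_prodMap]
    exact hg _ hσ.2

theorem ContigClass.prodMap_left {f f' : V₁ → W₁} {g : V₂ → W₂}
    (hf : ContigClass K₁ L₁ f f') (hg : IsSimplicialMap K₂ L₂ g) :
    ContigClass (prodSC K₁ K₂) (prodSC L₁ L₂) (Prod.map f g) (Prod.map f' g) := by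
  induction hf with
  | refl => exact .refl
  | tail _ hstep ih => exact ih.tail (hstep.prodMap hg.contiguous_self)

theorem ContigClass.prodMap_right {f : V₁ → W₁} {g g' : V₂ → W₂}
    (hf : IsSimplicialMap K₁ L₁ f) (hg : ContigClass K₂ L₂ g g') :
    ContigClass (prodSC K₁ K₂) (prodSC L₁ L₂) (Prod.map f g) (Prod.map f g') := by
  induction hg with
  | refl => exact .refl
  | tail _ hstep ih => exact ih.tail (hf.contiguous_self.prodMap hstep)

/- The chains in the two factors may have different lengths, so they are run one after the other,
moving one coordinate at a time; this is why `g` and `f'` must be simplicial. -/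
theorem ContigClass.prodMap {f f' : V₁ → W₁} {g g' : V₂ → W₂}
    (hf : ContigClass K₁ L₁ f f') (hg : ContigClass K₂ L₂ g g')
    (hf' : IsSimplicialMap K₁ L₁ f') (hg₀ : IsSimplicialMap K₂ L₂ g) :
    ContigClass (prodSC K₁ K₂) (prodSC L₁ L₂) (Prod.map f g) (Prod.map f' g') :=
  (hf.prodMap_left hg₀).trans (ContigClass.prodMap_right hf' hg)

theorem StrongEquiv.prod (h₁ : StrongEquiv K₁ L₁) (h₂ : StrongEquiv K₂ L₂) :
    StrongEquiv (prodSC K₁ K₂) (prodSC L₁ L₂) := by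
  obtain ⟨φ₁, ψ₁, hφ₁, hψ₁, hL₁, hK₁⟩ := h₁
  obtain ⟨φ₂, ψ₂, hφ₂, hψ₂, hL₂, hK₂⟩ := h₂
  refine ⟨Prod.map φ₁ φ₂, Prod.map ψ₁ ψ₂, hφ₁.prodMap hφ₂, hψ₁.prodMap hψ₂, ?_, ?_⟩
  · rw [Prod.map_comp_map, ← Prod.map_id]
    exact hL₁.prodMap hL₂ (isSimplicialMap_id L₁) (hφ₂.comp hψ₂)
  · rw [Prod.map_comp_map, ← Prod.map_id]
    exact hK₁.prodMap hK₂ (isSimplicialMap_id K₁) (hψ₂.comp hφ₂)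

end

/-- strong homotopy equivalence is preserved by categorical squares. -/
theorem strongEquiv_prod {V W : Type} (K : SC V) (L : SC W)
    (h : StrongEquiv K L) : StrongEquiv (prodSC K K) (prodSC L L) :=
  h.prod h
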